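/- arXiv:2601.10625 — 5 statements merged into one kernel-verified Lean document; each statement's English description precedes it below -/
import Mathlib

section
/- Let $A$ be a Poisson algebra with families $(F_k)_{k\ge 0}$, $(J_k)_{k\ge 0}$ satisfying $\{F_m,F_n\}=0$, $\{J_m,F_n\}=n F_{m+n-2}$, and $\{J_m,J_n\}=(n-m)J_{m+n-2}$ for $m,n\ge 1$. Define $K_{m,n} := J_m F_n - J_n F_m$. Then for all $i,j,m,n \ge 1$: $\{K_{i,j}, K_{m,n}\} = F_i(m K_{n,j+m-2} + n K_{j+n-2,m}) + F_j(m K_{i+m-2,n} + n K_{m,i+n-2}) + F_m(i K_{i+n-2,j} + j K_{i,j+n-2}) + F_n(i K_{j,i+m-2} + j K_{j+m-2,i})$, where indices $\ge 0$ are allowed on the right via the same definitions. -/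
/-- Formal closure of the Calogero–Moser symmetry algebra:
the Poisson bracket of two `K`'s. -/
theorem stmt1 {A : Type*} [CommRing A] (br : A → A → A)
    (hadd_left : ∀ a b c : A, br (a + b) c = br a c + br b c)
    (hadd_right : ∀ a b c : A, br a (b + c) = br a b + br a c)
    (hsmul_left : ∀ (r : ℤ) (a b : A), br (r • a) b = r • br a b)
    (hsmul_right : ∀ (r : ℤ) (a b : A), br a (r • b) = r • br a b)
    (hskew : ∀ a b : A, br a b = - br b a)
    (hleib : ∀ a b c : A, br a (b * c) = br a b * c + b * br a c)
    (F J : ℕ → A)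
    (hFF : ∀ m n : ℕ, 1 ≤ m → 1 ≤ n → br (F m) (F n) = 0)
    (hJF : ∀ m n : ℕ, 1 ≤ m → 1 ≤ n → br (J m) (F n) = n • F (m + n - 2))
    (hJJ : ∀ m n : ℕ, 1 ≤ m → 1 ≤ n →
      br (J m) (J n) = ((n : ℤ) - (m : ℤ)) • J (m + n - 2))
    (K : ℕ → ℕ → A) (hK : ∀ m n : ℕ, K m n = J m * F n - J n * F m) :
    ∀ i j m n : ℕ, 1 ≤ i → 1 ≤ j → 1 ≤ m → 1 ≤ n →
      br (K i j) (K m n) =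
        F i * (m • K n (j + m - 2) + n • K (j + n - 2) m)
        + F j * (m • K (i + m - 2) n + n • K m (i + n - 2))
        + F m * (i • K (i + n - 2) j + j • K i (j + n - 2))
        + F n * (i • K j (i + m - 2) + j • K (j + m - 2) i) := by
  have hneg_left : ∀ a b : A, br (-a) b = - br a b := by
    intro a b
    have := hsmul_left (-1) a b
    simpa using this
  have hsub_left : ∀ a b c : A, br (a - b) c = br a c - br b c := by
    intro a b c
    rw [sub_eq_add_neg, hadd_left, hneg_left, sub_eq_add_neg]
  have hneg_right : ∀ a b : A, br a (-b) = - br a b := by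
    intro a b
    have := hsmul_right (-1) a b
    simpa using this
  have hsub_right : ∀ a b c : A, br a (b - c) = br a b - br a c := by
    intro a b c
    rw [sub_eq_add_neg, hadd_right, hneg_right, sub_eq_add_neg]
  have hleft : ∀ x y z : A, br (x * y) z = br x z * y + x * br y z := by
    intro x y z
    rw [hskew, hleib, hskew z x, hskew z y]; ring
  have hE : ∀ a b c d : ℕ, 1 ≤ a → 1 ≤ b → 1 ≤ c → 1 ≤ d →
      br (J a * F b) (J c * F d) =
        ((c : ℤ) - (a : ℤ)) • (J (a + c - 2) * F b * F d)
        - (b : ℤ) • (J a * F (b + c - 2) * F d)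
        + (d : ℤ) • (J c * F (a + d - 2) * F b) := by
    intro a b c d ha hb hc hd
    rw [hleib, hleft, hleft, hJJ a c ha hc, hJF a d ha hd,
      hskew (F b) (J c), hJF c b hc hb, hFF b d hb hd,
      show c + b - 2 = b + c - 2 from by omega]
    simp only [zsmul_eq_mul, nsmul_eq_mul]
    push_cast
    ring
  intro i j m n hi hj hm hn
  obtain ⟨a, rfl⟩ : ∃ a, i = a + 1 := ⟨i - 1, by omega⟩
  obtain ⟨b, rfl⟩ : ∃ b, j = b + 1 := ⟨j - 1, by omega⟩
  obtain ⟨c, rfl⟩ : ∃ c, m = c + 1 := ⟨m - 1, by omega⟩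
  obtain ⟨d, rfl⟩ : ∃ d, n = d + 1 := ⟨n - 1, by omega⟩
  simp only [hK]
  rw [hsub_left, hsub_right, hsub_right,
    hE (a+1) (b+1) (c+1) (d+1) (by omega) (by omega) (by omega) (by omega),
    hE (a+1) (b+1) (d+1) (c+1) (by omega) (by omega) (by omega) (by omega),
    hE (b+1) (a+1) (c+1) (d+1) (by omega) (by omega) (by omega) (by omega),
    hE (b+1) (a+1) (d+1) (c+1) (by omega) (by omega) (by omega) (by omega)]
  simp only [show ∀ x y : ℕ, (x + 1) + (y + 1) - 2 = x + y from fun x y => by omega]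
  simp only [zsmul_eq_mul, nsmul_eq_mul]
  push_cast
  ring
end

section
/- In the 2-body Calogero–Moser system with $F_1 = p_1+p_2$, $F_2 = p_1^2+p_2^2+2\nu^2/(q_1-q_2)^2$, and $K_{2,1} = (q_1 p_1 + q_2 p_2) F_1 - (q_1+q_2) F_2$, the canonical Poisson bracket satisfies $\{F_1, K_{2,1}\} = 2F_2 - F_1^2$. -/
/-!
`F₁` generates simultaneous translation of `q₁` and `q₂`, so `{F₁, K₂₁}` is minus the
derivative of `K₂₁` along that translation. The potential `2ν²/(q₁ - q₂)²` is translation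
invariant, so only the explicit factors `q₁ p₁ + q₂ p₂` and `q₁ + q₂` of `K₂₁` are differentiated,
and that derivative is `F₁ · F₁ - 2 F₂`.
-/

/-- Canonical Poisson bracket of two functions of `(q₁, q₂, p₁, p₂)`. -/
noncomputable def pbr (f g : ℝ → ℝ → ℝ → ℝ → ℝ) (q₁ q₂ p₁ p₂ : ℝ) : ℝ :=
    deriv (fun x => f x q₂ p₁ p₂) q₁ * deriv (fun x => g q₁ q₂ x p₂) p₁
  - deriv (fun x => f q₁ q₂ x p₂) p₁ * deriv (fun x => g x q₂ p₁ p₂) q₁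
  + deriv (fun x => f q₁ x p₁ p₂) q₂ * deriv (fun x => g q₁ q₂ p₁ x) p₂
  - deriv (fun x => f q₁ q₂ p₁ x) p₂ * deriv (fun x => g q₁ x p₁ p₂) q₂

namespace CalogeroMoser

def F₁ : ℝ → ℝ → ℝ → ℝ → ℝ := fun _ _ p₁ p₂ => p₁ + p₂

noncomputable def F₂ (ν : ℝ) : ℝ → ℝ → ℝ → ℝ → ℝ :=
  fun q₁ q₂ p₁ p₂ => p₁ ^ 2 + p₂ ^ 2 + 2 * ν ^ 2 / (q₁ - q₂) ^ 2

noncomputable def K₂₁ (ν : ℝ) : ℝ → ℝ → ℝ → ℝ → ℝ :=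
  fun q₁ q₂ p₁ p₂ => (q₁ * p₁ + q₂ * p₂) * F₁ q₁ q₂ p₁ p₂ - (q₁ + q₂) * F₂ ν q₁ q₂ p₁ p₂

theorem pbr_F₁_left (g : ℝ → ℝ → ℝ → ℝ → ℝ) (q₁ q₂ p₁ p₂ : ℝ) :
    pbr F₁ g q₁ q₂ p₁ p₂ =
      -(deriv (fun x => g x q₂ p₁ p₂) q₁ + deriv (fun x => g q₁ x p₁ p₂) q₂) := by
  simp only [pbr, F₁, differentiableAt_const, deriv_fun_add, deriv_const', add_zero, zero_mul,
    differentiableAt_fun_id, deriv_id'', one_mul, zero_sub, deriv_const_add_id', neg_add_rev]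
  ring

theorem hasDerivAt_div_sub_sq (c b : ℝ) {a : ℝ} (h : a ≠ b) :
    HasDerivAt (fun x => c / (x - b) ^ 2) (-(2 * c) / (a - b) ^ 3) a := by
  have hsub : a - b ≠ 0 := sub_ne_zero.2 h
  refine ((hasDerivAt_const a c).fun_div (((hasDerivAt_id' a).sub_const b).fun_pow 2)
    (pow_ne_zero 2 hsub)).congr_deriv ?_
  field_simp
  ring

theorem hasDerivAt_K₂₁_q₁ (ν : ℝ) {q₁ q₂ : ℝ} (p₁ p₂ : ℝ) (h : q₁ ≠ q₂) :
    HasDerivAt (fun x => K₂₁ ν x q₂ p₁ p₂)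
      (p₁ * (p₁ + p₂) - F₂ ν q₁ q₂ p₁ p₂ + 4 * ν ^ 2 * (q₁ + q₂) / (q₁ - q₂) ^ 3) q₁ := by
  have hV := (hasDerivAt_div_sub_sq (2 * ν ^ 2) q₂ h).const_add (p₁ ^ 2 + p₂ ^ 2)
  refine (((((hasDerivAt_id' q₁).mul_const p₁).add_const (q₂ * p₂)).mul_const (p₁ + p₂)).fun_sub
    (((hasDerivAt_id' q₁).add_const q₂).fun_mul hV)).congr_deriv ?_
  simp only [F₂]
  ring

theorem hasDerivAt_K₂₁_q₂ (ν : ℝ) {q₁ q₂ : ℝ} (p₁ p₂ : ℝ) (h : q₁ ≠ q₂) :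
    HasDerivAt (fun x => K₂₁ ν q₁ x p₁ p₂)
      (p₂ * (p₁ + p₂) - F₂ ν q₁ q₂ p₁ p₂ - 4 * ν ^ 2 * (q₁ + q₂) / (q₁ - q₂) ^ 3) q₂ := by
  have hV : HasDerivAt (fun x => 2 * ν ^ 2 / (q₁ - x) ^ 2) (2 * (2 * ν ^ 2) / (q₁ - q₂) ^ 3) q₂ := by
    convert hasDerivAt_div_sub_sq (2 * ν ^ 2) q₁ h.symm using 1
    · ext x
      ring
    · rw [← neg_sub q₁ q₂, Odd.neg_pow (by decide), div_neg, neg_div, neg_neg]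
  refine (((((hasDerivAt_id' q₂).mul_const p₂).const_add (q₁ * p₁)).mul_const (p₁ + p₂)).fun_sub
    (((hasDerivAt_id' q₂).const_add q₁).fun_mul (hV.const_add _))).congr_deriv ?_
  simp only [F₂]
  ring

end CalogeroMoser

open CalogeroMoser in
/-- `{F₁, K₂₁} = 2 F₂ - F₁²` for the 2-body Calogero–Moser
system. -/
theorem stmt5 (ν : ℝ) :
    ∀ q₁ q₂ p₁ p₂ : ℝ, q₁ ≠ q₂ →
      pbr (fun _ _ p₁ p₂ => p₁ + p₂)
          (fun q₁ q₂ p₁ p₂ =>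
            (q₁ * p₁ + q₂ * p₂) * (p₁ + p₂)
            - (q₁ + q₂) * (p₁ ^ 2 + p₂ ^ 2 + 2 * ν ^ 2 / (q₁ - q₂) ^ 2))
          q₁ q₂ p₁ p₂
      = 2 * (p₁ ^ 2 + p₂ ^ 2 + 2 * ν ^ 2 / (q₁ - q₂) ^ 2)
        - (p₁ + p₂) ^ 2 := by
  intro q₁ q₂ p₁ p₂ hq
  change pbr F₁ (K₂₁ ν) q₁ q₂ p₁ p₂ = 2 * F₂ ν q₁ q₂ p₁ p₂ - (p₁ + p₂) ^ 2
  rw [pbr_F₁_left, (hasDerivAt_K₂₁_q₁ ν p₁ p₂ hq).deriv, (hasDerivAt_K₂₁_q₂ ν p₁ p₂ hq).deriv]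
  ring
end

section
/- In the 2-body Calogero–Moser system with $F_2 = p_1^2+p_2^2+2\nu^2/(q_1-q_2)^2$ and $K_{2,1} = (q_1 p_1 + q_2 p_2)(p_1+p_2) - (q_1+q_2) F_2$, the canonical Poisson bracket satisfies $\{F_2, K_{2,1}\} = 0$, i.e., $K_{2,1}$ is a constant of motion for the Hamiltonian $H^{(2)} = F_2/2$. -/
section PoissonBracket

variable {f g h : ℝ → ℝ → ℝ → ℝ → ℝ} {q₁ q₂ p₁ p₂ : ℝ}

def PartiallyDifferentiableAt (g : ℝ → ℝ → ℝ → ℝ → ℝ) (q₁ q₂ p₁ p₂ : ℝ) : Prop :=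
  DifferentiableAt ℝ (fun x => g x q₂ p₁ p₂) q₁ ∧ DifferentiableAt ℝ (fun x => g q₁ x p₁ p₂) q₂ ∧
    DifferentiableAt ℝ (fun x => g q₁ q₂ x p₂) p₁ ∧ DifferentiableAt ℝ (fun x => g q₁ q₂ p₁ x) p₂

theorem pbr_self (f : ℝ → ℝ → ℝ → ℝ → ℝ) (q₁ q₂ p₁ p₂ : ℝ) : pbr f f q₁ q₂ p₁ p₂ = 0 := by
  unfold pbr
  ring

theorem pbr_sub (hg : PartiallyDifferentiableAt g q₁ q₂ p₁ p₂)
    (hh : PartiallyDifferentiableAt h q₁ q₂ p₁ p₂) :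
    pbr f (fun a b c d => g a b c d - h a b c d) q₁ q₂ p₁ p₂ =
      pbr f g q₁ q₂ p₁ p₂ - pbr f h q₁ q₂ p₁ p₂ := by
  obtain ⟨hg₁, hg₂, hg₃, hg₄⟩ := hg
  obtain ⟨hh₁, hh₂, hh₃, hh₄⟩ := hh
  simp only [pbr, deriv_fun_sub hg₁ hh₁, deriv_fun_sub hg₂ hh₂, deriv_fun_sub hg₃ hh₃,
    deriv_fun_sub hg₄ hh₄]
  ring

theorem pbr_mul (hg : PartiallyDifferentiableAt g q₁ q₂ p₁ p₂)
    (hh : PartiallyDifferentiableAt h q₁ q₂ p₁ p₂) :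
    pbr f (fun a b c d => g a b c d * h a b c d) q₁ q₂ p₁ p₂ =
      pbr f g q₁ q₂ p₁ p₂ * h q₁ q₂ p₁ p₂ + g q₁ q₂ p₁ p₂ * pbr f h q₁ q₂ p₁ p₂ := by
  obtain ⟨hg₁, hg₂, hg₃, hg₄⟩ := hg
  obtain ⟨hh₁, hh₂, hh₃, hh₄⟩ := hh
  simp only [pbr, deriv_fun_mul hg₁ hh₁, deriv_fun_mul hg₂ hh₂, deriv_fun_mul hg₃ hh₃,
    deriv_fun_mul hg₄ hh₄]
  ring

theorem PartiallyDifferentiableAt.mul (hg : PartiallyDifferentiableAt g q₁ q₂ p₁ p₂)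
    (hh : PartiallyDifferentiableAt h q₁ q₂ p₁ p₂) :
    PartiallyDifferentiableAt (fun a b c d => g a b c d * h a b c d) q₁ q₂ p₁ p₂ :=
  ⟨hg.1.mul hh.1, hg.2.1.mul hh.2.1, hg.2.2.1.mul hh.2.2.1, hg.2.2.2.mul hh.2.2.2⟩

end PoissonBracket

noncomputable def calogeroMoserF₂ (ν q₁ q₂ p₁ p₂ : ℝ) : ℝ :=
  p₁ ^ 2 + p₂ ^ 2 + 2 * ν ^ 2 / (q₁ - q₂) ^ 2

def dilation (q₁ q₂ p₁ p₂ : ℝ) : ℝ := q₁ * p₁ + q₂ * p₂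

def totalMomentum (_ _ p₁ p₂ : ℝ) : ℝ := p₁ + p₂

def positionSum (q₁ q₂ _ _ : ℝ) : ℝ := q₁ + q₂

theorem partiallyDifferentiableAt_dilation (q₁ q₂ p₁ p₂ : ℝ) :
    PartiallyDifferentiableAt dilation q₁ q₂ p₁ p₂ := by
  unfold PartiallyDifferentiableAt dilation
  refine ⟨?_, ?_, ?_, ?_⟩ <;> fun_prop

theorem partiallyDifferentiableAt_totalMomentum (q₁ q₂ p₁ p₂ : ℝ) :
    PartiallyDifferentiableAt totalMomentum q₁ q₂ p₁ p₂ := by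
  unfold PartiallyDifferentiableAt totalMomentum
  refine ⟨?_, ?_, ?_, ?_⟩ <;> fun_prop

theorem partiallyDifferentiableAt_positionSum (q₁ q₂ p₁ p₂ : ℝ) :
    PartiallyDifferentiableAt positionSum q₁ q₂ p₁ p₂ := by
  unfold PartiallyDifferentiableAt positionSum
  refine ⟨?_, ?_, ?_, ?_⟩ <;> fun_prop

section CalogeroMoser

variable {ν q₁ q₂ p₁ p₂ : ℝ}

theorem hasDerivAt_calogeroMoserF₂ (h : q₁ ≠ q₂) :
    HasDerivAt (fun x => calogeroMoserF₂ ν x q₂ p₁ p₂) (-4 * ν ^ 2 / (q₁ - q₂) ^ 3) q₁ ∧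
    HasDerivAt (fun x => calogeroMoserF₂ ν q₁ x p₁ p₂) (4 * ν ^ 2 / (q₁ - q₂) ^ 3) q₂ ∧
    HasDerivAt (fun x => calogeroMoserF₂ ν q₁ q₂ x p₂) (2 * p₁) p₁ ∧
    HasDerivAt (fun x => calogeroMoserF₂ ν q₁ q₂ p₁ x) (2 * p₂) p₂ := by
  have hq : q₁ - q₂ ≠ 0 := sub_ne_zero.mpr h
  unfold calogeroMoserF₂
  refine ⟨?_, ?_, ?_, ?_⟩
  · have hd := ((hasDerivAt_id q₁).sub_const q₂).fun_pow 2
    refine (((hasDerivAt_const q₁ (2 * ν ^ 2)).fun_div hd (pow_ne_zero 2 hq)).const_add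
      (p₁ ^ 2 + p₂ ^ 2)).congr_deriv ?_
    simp only [id]
    field_simp
    ring
  · have hd := ((hasDerivAt_id q₂).const_sub q₁).fun_pow 2
    refine (((hasDerivAt_const q₂ (2 * ν ^ 2)).fun_div hd (pow_ne_zero 2 hq)).const_add
      (p₁ ^ 2 + p₂ ^ 2)).congr_deriv ?_
    simp only [id]
    field_simp
    ring
  · simpa using ((hasDerivAt_pow 2 p₁).add_const (p₂ ^ 2)).add_const (2 * ν ^ 2 / (q₁ - q₂) ^ 2)
  · simpa using ((hasDerivAt_pow 2 p₂).const_add (p₁ ^ 2)).add_const (2 * ν ^ 2 / (q₁ - q₂) ^ 2)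

theorem partiallyDifferentiableAt_calogeroMoserF₂ (h : q₁ ≠ q₂) :
    PartiallyDifferentiableAt (calogeroMoserF₂ ν) q₁ q₂ p₁ p₂ :=
  let ⟨h₁, h₂, h₃, h₄⟩ := hasDerivAt_calogeroMoserF₂ (ν := ν) (p₁ := p₁) (p₂ := p₂) h
  ⟨h₁.differentiableAt, h₂.differentiableAt, h₃.differentiableAt, h₄.differentiableAt⟩

theorem pbr_calogeroMoserF₂ (h : q₁ ≠ q₂) (g : ℝ → ℝ → ℝ → ℝ → ℝ) :
    pbr (calogeroMoserF₂ ν) g q₁ q₂ p₁ p₂ =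
      -4 * ν ^ 2 / (q₁ - q₂) ^ 3 *
          (deriv (fun x => g q₁ q₂ x p₂) p₁ - deriv (fun x => g q₁ q₂ p₁ x) p₂)
        - 2 * (p₁ * deriv (fun x => g x q₂ p₁ p₂) q₁ + p₂ * deriv (fun x => g q₁ x p₁ p₂) q₂) := by
  obtain ⟨h₁, h₂, h₃, h₄⟩ := hasDerivAt_calogeroMoserF₂ (ν := ν) (p₁ := p₁) (p₂ := p₂) h
  rw [pbr, h₁.deriv, h₂.deriv, h₃.deriv, h₄.deriv]
  ring

theorem pbr_calogeroMoserF₂_totalMomentum (h : q₁ ≠ q₂) :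
    pbr (calogeroMoserF₂ ν) totalMomentum q₁ q₂ p₁ p₂ = 0 := by
  simp [pbr_calogeroMoserF₂ h, totalMomentum]

theorem pbr_calogeroMoserF₂_positionSum (h : q₁ ≠ q₂) :
    pbr (calogeroMoserF₂ ν) positionSum q₁ q₂ p₁ p₂ = -2 * totalMomentum q₁ q₂ p₁ p₂ := by
  simp [pbr_calogeroMoserF₂ h, positionSum, totalMomentum]

theorem pbr_calogeroMoserF₂_dilation (h : q₁ ≠ q₂) :
    pbr (calogeroMoserF₂ ν) dilation q₁ q₂ p₁ p₂ = -2 * calogeroMoserF₂ ν q₁ q₂ p₁ p₂ := by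
  have hq : q₁ - q₂ ≠ 0 := sub_ne_zero.mpr h
  simp only [pbr_calogeroMoserF₂ h, dilation, calogeroMoserF₂, deriv_add_const', deriv_const_add',
    deriv_const_mul_id', deriv_mul_const_field', deriv_id'']
  field_simp
  ring

end CalogeroMoser

/-- `{F₂, K₂₁} = 0`, i.e. `K₂₁` is a constant of motion of the
2-body Calogero–Moser Hamiltonian `H = F₂/2`. -/
theorem stmt6 (ν : ℝ) :
    ∀ q₁ q₂ p₁ p₂ : ℝ, q₁ ≠ q₂ →
      pbr (fun q₁ q₂ p₁ p₂ => p₁ ^ 2 + p₂ ^ 2 + 2 * ν ^ 2 / (q₁ - q₂) ^ 2)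
          (fun q₁ q₂ p₁ p₂ =>
            (q₁ * p₁ + q₂ * p₂) * (p₁ + p₂)
            - (q₁ + q₂) * (p₁ ^ 2 + p₂ ^ 2 + 2 * ν ^ 2 / (q₁ - q₂) ^ 2))
          q₁ q₂ p₁ p₂ = 0 := by
  intro q₁ q₂ p₁ p₂ h
  change pbr (calogeroMoserF₂ ν) (fun a b c d =>
    dilation a b c d * totalMomentum a b c d - positionSum a b c d * calogeroMoserF₂ ν a b c d)
    q₁ q₂ p₁ p₂ = 0
  have hF : PartiallyDifferentiableAt (calogeroMoserF₂ ν) q₁ q₂ p₁ p₂ :=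
    partiallyDifferentiableAt_calogeroMoserF₂ h
  have hD := partiallyDifferentiableAt_dilation q₁ q₂ p₁ p₂
  have hP := partiallyDifferentiableAt_totalMomentum q₁ q₂ p₁ p₂
  have hQ := partiallyDifferentiableAt_positionSum q₁ q₂ p₁ p₂
  rw [pbr_sub (hD.mul hP) (hQ.mul hF), pbr_mul hD hP, pbr_mul hQ hF, pbr_self,
    pbr_calogeroMoserF₂_dilation h, pbr_calogeroMoserF₂_totalMomentum h,
    pbr_calogeroMoserF₂_positionSum h]
  ring
end

section
/- Let $L, \bar L, X, \bar X, \widetilde{M}$ be $N \times N$ matrices over a commutative ring, with $\widetilde{M}$ invertible, $h$ and $c$ scalars with $c$ invertible, and suppose $\bar{L}\widetilde{M} = \widetilde{M} L$ and $\bar{X}(\mathbb{1} - h c^{-1}\bar L) = \widetilde{M}\bigl[X(\mathbb{1} - h c^{-1} L) + h L\bigr]\widetilde{M}^{-1}$. Define $\widetilde{K}_{m,n} := \mathrm{tr}\bigl[X(\mathbb{1} - h c^{-1}L)L^{m-1}\bigr]\mathrm{tr}(L^n) - \mathrm{tr}(L^m)\,\mathrm{tr}\bigl[X(\mathbb{1}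 - h c^{-1}L)L^{n-1}\bigr]$ for $m, n \ge 1$. Then $\widetilde{K}_{m,n}$ is invariant, i.e., the same expression evaluated with $\bar X, \bar L$ equals $\widetilde{K}_{m,n}$. -/
open Matrix

section Aux

variable {R : Type*} [CommRing R] {N : ℕ}

lemma conj_pow' (L M : Matrix (Fin N) (Fin N) R) [Invertible M] (k : ℕ) :
    (M * L * ⅟M) ^ k = M * L ^ k * ⅟M := by
  induction k with
  | zero => simp
  | succ k ih =>
    rw [pow_succ, ih, pow_succ]
    simp [Matrix.mul_assoc]

lemma myTraceConj (A M : Matrix (Fin N) (Fin N) R) [Invertible M] :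
    (M * A * ⅟M).trace = A.trace := by
  rw [Matrix.trace_mul_cycle, invOf_mul_self, Matrix.one_mul]

end Aux

/-- Conservation of the additional integrals
`K̃ₘₙ = tr[X(𝟙 - h c⁻¹ L)L^(m-1)] tr(Lⁿ) - tr(Lᵐ) tr[X(𝟙 - h c⁻¹ L)L^(n-1)]`
of the Nijhoff–Pang discrete Calogero–Moser system. -/
theorem stmt13 {R : Type*} [CommRing R] {N : ℕ}
    (L Lbar X Xbar M : Matrix (Fin N) (Fin N) R) [Invertible M]
    (h c : R) [Invertible c]
    (hL : Lbar * M = M * L)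
    (hX : Xbar * (1 - (h * ⅟c) • Lbar) =
      M * (X * (1 - (h * ⅟c) • L) + h • L) * ⅟M) :
    ∀ m n : ℕ, 1 ≤ m → 1 ≤ n →
      (Xbar * (1 - (h * ⅟c) • Lbar) * Lbar ^ (m - 1)).trace *
          (Lbar ^ n).trace
        - (Lbar ^ m).trace *
          (Xbar * (1 - (h * ⅟c) • Lbar) * Lbar ^ (n - 1)).trace
      = (X * (1 - (h * ⅟c) • L) * L ^ (m - 1)).trace * (L ^ n).trace
        - (L ^ m).trace * (X * (1 - (h * ⅟c) • L) * L ^ (n - 1)).trace := by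
  have hLbar : Lbar = M * L * ⅟M := by
    rw [← hL, Matrix.mul_assoc, mul_invOf_self, Matrix.mul_one]
  have hpow : ∀ k : ℕ, Lbar ^ k = M * L ^ k * ⅟M := fun k => by
    rw [hLbar, conj_pow']
  have htr : ∀ k : ℕ, (Lbar ^ k).trace = (L ^ k).trace := fun k => by
    rw [hpow, myTraceConj]
  have key : ∀ k : ℕ, 1 ≤ k →
      (Xbar * (1 - (h * ⅟c) • Lbar) * Lbar ^ (k - 1)).trace
        = (X * (1 - (h * ⅟c) • L) * L ^ (k - 1)).trace + h * (L ^ k).trace := by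
    intro k hk
    have e : Xbar * (1 - (h * ⅟c) • Lbar) * Lbar ^ (k - 1)
        = M * ((X * (1 - (h * ⅟c) • L) + h • L) * L ^ (k - 1)) * ⅟M := by
      rw [hX, hpow]
      simp only [Matrix.mul_assoc, invOf_mul_cancel_left]
    rw [e, myTraceConj, Matrix.add_mul, Matrix.trace_add, Matrix.smul_mul,
      Matrix.trace_smul, ← pow_succ', Nat.sub_add_cancel hk, smul_eq_mul]
  intro m n hm hn
  rw [key m hm, key n hn, htr, htr]
  ring
end

section
/- Let $L, X$ be $3\times 3$ matrices over a field of characteristic zero, $F_k = \mathrm{tr}(L^k)$, $J_k = \mathrm{tr}(XL^{k-1})$, and $K_{m,n} = J_m F_n - J_n F_m$. Then $K_{4,1} = F_1 K_{3,1} - \tfrac{1}{2}(F_1^2 - F_2)K_{2,1}$ and $K_{4,2} = F_1 K_{3,2} - \tfrac{1}{6}(F_1^3 - 3F_1 F_2 + 2F_3)K_{2,1}$. -/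
/-- For `3 × 3` matrices `L, X` over a field of characteristic
zero, with `F k = tr(Lᵏ)`, `J k = tr(X L^(k-1))`, `K m n = J m F n - J n F m`:
`K₄₁ = F₁K₃₁ - ½(F₁² - F₂)K₂₁` and
`K₄₂ = F₁K₃₂ - ⅙(F₁³ - 3F₁F₂ + 2F₃)K₂₁`. -/
theorem stmt19 {𝕂 : Type*} [Field 𝕂] [CharZero 𝕂]
    (L X : Matrix (Fin 3) (Fin 3) 𝕂) (F J : ℕ → 𝕂) (K : ℕ → ℕ → 𝕂)
    (hF : ∀ k : ℕ, F k = (L ^ k).trace)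
    (hJ : ∀ k : ℕ, 1 ≤ k → J k = (X * L ^ (k - 1)).trace)
    (hK : ∀ m n : ℕ, K m n = J m * F n - J n * F m) :
    K 4 1 = F 1 * K 3 1 - (1 / 2 : 𝕂) * (F 1 ^ 2 - F 2) * K 2 1
    ∧ K 4 2 = F 1 * K 3 2
        - (1 / 6 : 𝕂) * (F 1 ^ 3 - 3 * F 1 * F 2 + 2 * F 3) * K 2 1 := by
  simp only [hK, hJ 1 (by norm_num), hJ 2 (by norm_num), hJ 3 (by norm_num),
    hJ 4 (by norm_num), hF]
  norm_num
  simp only [Matrix.trace, Matrix.diag, Matrix.mul_apply, pow_succ, pow_zero,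
    Matrix.one_mul, Matrix.mul_one, Fin.sum_univ_three, Finset.sum_add_distrib]
  constructor <;> ring
end
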